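/- Quasi-completeness of nominal rewriting: if the rewrite theory R is a presentation of the equational theory T, and Δ ⊢_T s = t is derivable in nominal algebra, then there exists a freshness context Γ whose atoms do not occur in atms(Δ, s, t) such that Δ ∪ Γ ⊢_R s ↔* t (s and t are joined by the symmetric rewrite relation in the extended context). -/

import Mathlib

/-! Nominal terms: atoms, permutations, terms, actions, freshness, α-equivalence,
nominal rewriting and nominal algebra, closed rewriting. -/

abbrev Atom := ℕ
abbrev Unknown := ℕ

/-- Finitely supported permutations of atoms. -/
def FinPerm := {π : Equiv.Perm Atom // {a | π a ≠ a}.Finite}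

namespace FinPerm

instance : CoeFun FinPerm (fun _ => Atom → Atom) := ⟨fun π => π.1⟩

def id : FinPerm := ⟨Equiv.refl Atom, by simp⟩

/-- `comp π π'` is `π ∘ π'` (first apply `π'`, then `π`). -/
def comp (π π' : FinPerm) : FinPerm :=
  ⟨π'.1.trans π.1, ((π.2.union π'.2).subset (by
    intro a ha
    simp only [Set.mem_setOf_eq, Equiv.trans_apply] at ha
    by_cases h : π'.1 a = a
    · exact Or.inl (by simpa [h] using ha)
    · exact Or.inr h))⟩

def inv (π : FinPerm) : FinPerm :=
  ⟨π.1.symm, π.2.subset (by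
    intro a ha h
    exact ha (π.1.symm_apply_eq.mpr h.symm))⟩

def swap (a b : Atom) : FinPerm :=
  ⟨Equiv.swap a b, (Set.toFinite {a, b}).subset (by
    intro c hc
    by_contra h
    simp only [Set.mem_insert_iff, Set.mem_singleton_iff, not_or] at h
    exact hc (Equiv.swap_apply_of_ne_of_ne h.1 h.2))⟩

/-- The (finite) set of atoms moved by `π`. -/
noncomputable def nontriv (π : FinPerm) : Finset Atom := π.2.toFinset

end FinPerm

/-- Nominal terms: atoms, moderated unknowns `π·X`, abstractions `[a]t`,
and term-formers applied to lists of arguments. -/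
inductive Term : Type where
  | atom : Atom → Term
  | var  : FinPerm → Unknown → Term
  | abs  : Atom → Term → Term
  | app  : ℕ → List Term → Term

/-- Permutation action on terms. -/
def permAct (π : FinPerm) : Term → Term
  | .atom a => .atom (π a)
  | .var π' X => .var (π.comp π') X
  | .abs a t => .abs (π a) (permAct π t)
  | .app f ts => .app f (ts.attach.map fun t => permAct π t.1)
decreasing_by
  all_goals simp_wf
  have := List.sizeOf_lt_of_mem t.2
  omega

/-- Substitutions, represented as total maps (the default value of `X` is `id·X`). -/
def Subst := Unknown → Term

/-- A substitution has finite domain. -/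
def Subst.FinDom (σ : Subst) : Prop := {X | σ X ≠ .var FinPerm.id X}.Finite

/-- Substitution action on terms. -/
def subst (σ : Subst) : Term → Term
  | .atom a => .atom a
  | .var π X => permAct π (σ X)
  | .abs a t => .abs a (subst σ t)
  | .app f ts => .app f (ts.attach.map fun t => subst σ t.1)
decreasing_by
  all_goals simp_wf
  have := List.sizeOf_lt_of_mem t.2
  omega

/-- Composition of substitutions: `(σ.comp θ) X = (Xσ)θ`. -/
def Subst.comp (σ θ : Subst) : Subst := fun X => subst θ (σ X)

/-- `σ∘π`, mapping `X` to `π·(σ X)`. -/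
def Subst.permComp (σ : Subst) (π : FinPerm) : Subst := fun X => permAct π (σ X)

mutual
/-- Atoms occurring in a term. -/
noncomputable def atmsF : Term → Finset Atom
  | .atom a => {a}
  | .var π _ => π.nontriv
  | .abs a t => insert a (atmsF t)
  | .app _ ts => atmsLF ts
noncomputable def atmsLF : List Term → Finset Atom
  | [] => ∅
  | t :: ts => atmsF t ∪ atmsLF ts
end

mutual
/-- Unknowns occurring in a term. -/
def unknF : Term → Finset Unknown
  | .atom _ => ∅
  | .var _ X => {X}
  | .abs _ t => unknF t
  | .app _ ts => unknLF ts
def unknLF : List Term → Finset Unknown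
  | [] => ∅
  | t :: ts => unknF t ∪ unknLF ts
end

/-- Freshness contexts: finite sets of primitive constraints `a#X`. -/
abbrev Ctx := Finset (Atom × Unknown)

def ctxAtoms (Δ : Ctx) : Finset Atom := Δ.image Prod.fst
def ctxUnkns (Δ : Ctx) : Finset Unknown := Δ.image Prod.snd

/-- Derivable freshness judgements `Δ ⊢ a # t`. -/
inductive Fresh (Δ : Ctx) : Atom → Term → Prop where
  | atom {a b} : a ≠ b → Fresh Δ a (.atom b)
  | var {a π X} : (π.inv a, X) ∈ Δ → Fresh Δ a (.var π X)
  | absSame {a t} : Fresh Δ a (.abs a t)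
  | absDiff {a b t} : a ≠ b → Fresh Δ a t → Fresh Δ a (.abs b t)
  | app {a f ts} : (∀ t ∈ ts, Fresh Δ a t) → Fresh Δ a (.app f ts)

/-- Derivable α-equivalence judgements `Δ ⊢ s ≈α t`. -/
inductive Aeq (Δ : Ctx) : Term → Term → Prop where
  | atom {a} : Aeq Δ (.atom a) (.atom a)
  | var {π π' : FinPerm} {X : Unknown} : (∀ a : Atom, (π : Atom → Atom) a ≠ (π' : Atom → Atom) a → (a, X) ∈ Δ) →
      Aeq Δ (.var π X) (.var π' X)
  | absSame {a t u} : Aeq Δ t u → Aeq Δ (.abs a t) (.abs a u)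
  | absDiff {a b t u} : a ≠ b → Fresh Δ b t → Aeq Δ (permAct (FinPerm.swap b a) t) u →
      Aeq Δ (.abs a t) (.abs b u)
  | app {f ts us} : ts.length = us.length → (∀ p ∈ ts.zip us, Aeq Δ p.1 p.2) →
      Aeq Δ (.app f ts) (.app f us)

/-- Subterm relation. -/
inductive Subterm : Term → Term → Prop where
  | refl (t) : Subterm t t
  | abs {s t a} : Subterm s t → Subterm s (.abs a t)
  | app {s t f ts} : t ∈ ts → Subterm s t → Subterm s (.app f ts)

mutual
/-- Number of occurrences of the unknown `X` in a term. -/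
def countUnk (X : Unknown) : Term → ℕ
  | .atom _ => 0
  | .var _ Y => if Y = X then 1 else 0
  | .abs _ t => countUnk X t
  | .app _ ts => countUnkL X ts
def countUnkL (X : Unknown) : List Term → ℕ
  | [] => 0
  | t :: ts => countUnk X t + countUnkL X ts
end

/-- A position: a term with a distinguished unknown occurring exactly once, as `id·X`. -/
structure Position where
  ctx : Term
  hole : Unknown
  once : countUnk hole ctx = 1
  idOnly : ∀ π : FinPerm, Subterm (.var π hole) ctx → π = FinPerm.id

def fillAux (X : Unknown) (u : Term) : Term → Term
  | .atom a => .atom a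
  | .var π Y => if Y = X then u else .var π Y
  | .abs a t => .abs a (fillAux X u t)
  | .app f ts => .app f (ts.attach.map fun t => fillAux X u t.1)
decreasing_by
  all_goals simp_wf
  have := List.sizeOf_lt_of_mem t.2
  omega

/-- `C[u]`: place `u` in the hole of the position `C`. -/
def Position.fill (C : Position) (u : Term) : Term := fillAux C.hole u C.ctx

/-- A rule `∇ ⊢ l → r` (also used for axioms `∇ ⊢ l = r`). -/
structure Rule where
  ctx : Ctx
  lhs : Term
  rhs : Term

noncomputable def Rule.atms (R : Rule) : Finset Atom := ctxAtoms R.ctx ∪ atmsF R.lhs ∪ atmsF R.rhs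
def Rule.unkn (R : Rule) : Finset Unknown := ctxUnkns R.ctx ∪ unknF R.lhs ∪ unknF R.rhs

/-- `Δ ⊢ ∇θ`: every constraint of `∇`, instantiated by `θ`, is derivable from `Δ`. -/
def FreshSubst (Δ N : Ctx) (θ : Subst) : Prop :=
  ∀ p ∈ N, Fresh Δ p.1 (subst θ (.var FinPerm.id p.2))

/-- One-step nominal rewriting with the rule `R` in context `Δ`. -/
def OneStepR (R : Rule) (Δ : Ctx) (s t : Term) : Prop :=
  ∃ (C : Position) (s' : Term) (π : FinPerm) (θ : Subst),
    s = C.fill s' ∧ FreshSubst Δ R.ctx θ ∧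
    Aeq Δ s' (permAct π (subst θ R.lhs)) ∧
    Aeq Δ (C.fill (permAct π (subst θ R.rhs))) t

def OneStep (Rw : Set Rule) (Δ : Ctx) (s t : Term) : Prop := ∃ R ∈ Rw, OneStepR R Δ s t

/-- `Δ ⊢_R s ↔* t`: the reflexive-symmetric-transitive closure, including
α-equivalence, of one-step rewriting. -/
inductive RewEq (Rw : Set Rule) (Δ : Ctx) : Term → Term → Prop where
  | step {s t} : OneStep Rw Δ s t → RewEq Rw Δ s t
  | alpha {s t} : Aeq Δ s t → RewEq Rw Δ s t
  | symm {s t} : RewEq Rw Δ s t → RewEq Rw Δ t s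
  | trans {s t u} : RewEq Rw Δ s t → RewEq Rw Δ t u → RewEq Rw Δ s u

/-- Atoms of a judgement `(Δ, s, t)`. -/
noncomputable def judgeAtms (Δ : Ctx) (s t : Term) : Finset Atom := ctxAtoms Δ ∪ atmsF s ∪ atmsF t

def judgeUnkn (Δ : Ctx) (s t : Term) : Finset Unknown := ctxUnkns Δ ∪ unknF s ∪ unknF t

/-- `Γ` is a fresh context for a set of atoms `A`: its atoms avoid `A`. -/
def FreshFor (Γ : Ctx) (A : Finset Atom) : Prop := ∀ p ∈ Γ, p.1 ∉ A

/-- Nominal algebra equality `Δ ⊢_T s = t`. -/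
inductive AlgEq (T : Set Rule) (Δ : Ctx) : Term → Term → Prop where
  | axm {s t} (R : Rule) (hR : R ∈ T) (Γ : Ctx) (C : Position) (π : FinPerm) (θ : Subst) :
      FreshFor Γ (judgeAtms Δ s t) →
      FreshSubst (Δ ∪ Γ) R.ctx θ →
      Aeq (Δ ∪ Γ) s (C.fill (permAct π (subst θ R.lhs))) →
      Aeq (Δ ∪ Γ) (C.fill (permAct π (subst θ R.rhs))) t →
      AlgEq T Δ s t
  | refl (s) : AlgEq T Δ s s
  | symm {s t} : AlgEq T Δ s t → AlgEq T Δ t s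
  | trans {s t u} : AlgEq T Δ s t → AlgEq T Δ t u → AlgEq T Δ s u

/-- `Rw` is a presentation of the equational theory `T`. -/
def Presents (Rw : Set Rule) (T : Set Rule) : Prop :=
  ∀ R : Rule, R ∈ T ↔ (R ∈ Rw ∨ Rule.mk R.ctx R.rhs R.lhs ∈ Rw)

/-- Structural renaming of atoms (by a permutation `τ`) and unknowns (by `ρ`). -/
def renameT (τ : FinPerm) (ρ : Unknown → Unknown) : Term → Term
  | .atom a => .atom (τ a)
  | .var π X => .var (τ.comp (π.comp τ.inv)) (ρ X)
  | .abs a t => .abs (τ a) (renameT τ ρ t)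
  | .app f ts => .app f (ts.attach.map fun t => renameT τ ρ t.1)
decreasing_by
  all_goals simp_wf
  have := List.sizeOf_lt_of_mem t.2
  omega

def renameCtx (τ : FinPerm) (ρ : Unknown → Unknown) (Δ : Ctx) : Ctx :=
  Δ.image (fun p => (τ p.1, ρ p.2))

def Rule.rename (τ : FinPerm) (ρ : Unknown → Unknown) (R : Rule) : Rule :=
  ⟨renameCtx τ ρ R.ctx, renameT τ ρ R.lhs, renameT τ ρ R.rhs⟩

/-- `R'` is a freshened variant of `R`, avoiding also the atoms `A` and unknowns `U`. -/
def FreshenedVariant (A : Finset Atom) (U : Finset Unknown) (R R' : Rule) : Prop :=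
  ∃ (τ : FinPerm) (ρ : Equiv.Perm Unknown),
    R' = R.rename τ ρ ∧
    (∀ a ∈ R.atms, τ a ∉ A ∪ R.atms) ∧
    (∀ X ∈ R.unkn, (ρ X) ∉ U ∪ R.unkn)

/-- A rule (or axiom) `∇ ⊢ l → r` is closed: a freshened variant of `∇ ⊢ (l,r)` matches
`∇ ⊢ (l,r)` in the context `∇` extended with `atms(R') # unkn(R)`. -/
def Rule.Closed (R : Rule) : Prop :=
  ∃ R' : Rule, FreshenedVariant ∅ ∅ R R' ∧
    ∃ σ : Subst, (∀ X, X ∉ R'.unkn → σ X = .var FinPerm.id X) ∧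
      FreshSubst (R.ctx ∪ R'.atms ×ˢ R.unkn) R'.ctx σ ∧
      Aeq (R.ctx ∪ R'.atms ×ˢ R.unkn) (subst σ R'.lhs) R.lhs ∧
      Aeq (R.ctx ∪ R'.atms ×ˢ R.unkn) (subst σ R'.rhs) R.rhs

/-- One-step closed rewriting `Δ ⊢ s →c_R t`. -/
def ClosedStepR (R : Rule) (Δ : Ctx) (s t : Term) : Prop :=
  ∃ R' : Rule, FreshenedVariant (judgeAtms Δ s t ∪ R.atms) (judgeUnkn Δ s t ∪ R.unkn) R R' ∧
    ∃ (C : Position) (s' : Term) (θ : Subst),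
      s = C.fill s' ∧
      FreshSubst (Δ ∪ R'.atms ×ˢ judgeUnkn Δ s t) R'.ctx θ ∧
      Aeq (Δ ∪ R'.atms ×ˢ judgeUnkn Δ s t) s' (subst θ R'.lhs) ∧
      Aeq (Δ ∪ R'.atms ×ˢ judgeUnkn Δ s t) (C.fill (subst θ R'.rhs)) t

def ClosedStep (Rw : Set Rule) (Δ : Ctx) (s t : Term) : Prop := ∃ R ∈ Rw, ClosedStepR R Δ s t

/-- `Δ ⊢_R s ↔c* t`: reflexive-symmetric-transitive closure, including α-equivalence,
of one-step closed rewriting. -/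
inductive ClosedRewEq (Rw : Set Rule) (Δ : Ctx) : Term → Term → Prop where
  | step {s t} : ClosedStep Rw Δ s t → ClosedRewEq Rw Δ s t
  | alpha {s t} : Aeq Δ s t → ClosedRewEq Rw Δ s t
  | symm {s t} : ClosedRewEq Rw Δ s t → ClosedRewEq Rw Δ t s
  | trans {s t u} : ClosedRewEq Rw Δ s t → ClosedRewEq Rw Δ t u → ClosedRewEq Rw Δ s u

/-! Induction on the nominal-algebra derivation. Since `Rw` presents `T`, an axiom instance in
the extended context `Δ ∪ Γ` is a single rewrite step, read forwards or backwards. The only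
difficulty is transitivity: the fresh context obtained for `s = t` avoids the atoms of `Δ, s, t`
but may clash with the atoms of the new endpoint `u`. Rewriting is equivariant under renaming of
atoms, so a permutation fixing `atms(Δ, s, t)` and moving the atoms of `Γ` past every atom in sight
turns `Γ` into a fresh context avoiding any prescribed finite set of atoms. -/

namespace FinPerm

theorem ext {π π' : FinPerm} (h : ∀ a, π a = π' a) : π = π' :=
  Subtype.ext (Equiv.ext h)

@[simp] theorem id_apply (a : Atom) : FinPerm.id a = a := rfl

@[simp] theorem comp_apply (π π' : FinPerm) (a : Atom) : π.comp π' a = π (π' a) := rfl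

@[simp] theorem inv_apply_apply (π : FinPerm) (a : Atom) : π.inv (π a) = a :=
  π.1.symm_apply_apply a

@[simp] theorem apply_inv_apply (π : FinPerm) (a : Atom) : π (π.inv a) = a :=
  π.1.apply_symm_apply a

theorem inv_apply_eq_iff {π : FinPerm} {a b : Atom} : π.inv a = b ↔ a = π b :=
  π.1.symm_apply_eq

theorem apply_injective (π : FinPerm) : Function.Injective π :=
  π.1.injective

theorem mem_nontriv {π : FinPerm} {a : Atom} : a ∈ π.nontriv ↔ π a ≠ a :=
  Set.Finite.mem_toFinset _

theorem comp_swap_comp_inv (τ : FinPerm) (a b : Atom) :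
    τ.comp ((swap a b).comp τ.inv) = swap (τ a) (τ b) := by
  refine ext fun x => ?_
  show τ (Equiv.swap a b (τ.inv x)) = Equiv.swap (τ a) (τ b) x
  rcases eq_or_ne x (τ a) with rfl | hxa
  · simp
  rcases eq_or_ne x (τ b) with rfl | hxb
  · simp
  have hxa' : τ.inv x ≠ a := fun h => hxa (by rw [← h, apply_inv_apply])
  have hxb' : τ.inv x ≠ b := fun h => hxb (by rw [← h, apply_inv_apply])
  rw [Equiv.swap_apply_of_ne_of_ne hxa' hxb', Equiv.swap_apply_of_ne_of_ne hxa hxb,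
    apply_inv_apply]

theorem comp_comp_inv_eq_self {τ π : FinPerm} (h : ∀ a ∈ π.nontriv, τ a = a) :
    τ.comp (π.comp τ.inv) = π := by
  have hfix : ∀ a, π a ≠ a → τ a = a := fun a ha => h a (mem_nontriv.mpr ha)
  refine ext fun x => ?_
  simp only [comp_apply]
  by_cases hx : π x = x
  · have hy : π (τ.inv x) = τ.inv x := by
      by_contra hy
      have hxy : x = τ.inv x := by simpa using hfix _ hy
      exact hy (hxy ▸ hx)
    rw [hy, apply_inv_apply, hx]
  · have hτx : τ.inv x = x := by
      conv_lhs => rw [← hfix x hx]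
      exact inv_apply_apply τ x
    rw [hτx, hfix _ fun h => hx (π.apply_injective h)]

def shiftSwapFun (B : Finset ℕ) (N : ℕ) (x : ℕ) : ℕ :=
  if x ∈ B then x + N else if N ≤ x ∧ x - N ∈ B then x - N else x

theorem shiftSwapFun_involutive {B : Finset ℕ} {N : ℕ} (hB : ∀ b ∈ B, b < N) :
    Function.Involutive (shiftSwapFun B N) := by
  intro x
  unfold shiftSwapFun
  by_cases h1 : x ∈ B
  · have h2 : x + N ∉ B := fun hc => by have := hB _ hc; omega
    have h3 : N ≤ x + N ∧ x + N - N ∈ B := ⟨by omega, by simpa using h1⟩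
    rw [if_pos h1, if_neg h2, if_pos h3]
    omega
  · by_cases h2 : N ≤ x ∧ x - N ∈ B
    · rw [if_neg h1, if_pos h2, if_pos h2.2]
      omega
    · rw [if_neg h1, if_neg h2, if_neg h1, if_neg h2]

def shiftSwap (B : Finset ℕ) (N : ℕ) (hB : ∀ b ∈ B, b < N) : FinPerm :=
  ⟨(shiftSwapFun_involutive hB).toPerm, by
    refine (B.finite_toSet.union (B.image (· + N)).finite_toSet).subset fun x hx => ?_
    have hx : shiftSwapFun B N x ≠ x := hx
    unfold shiftSwapFun at hx
    by_cases h1 : x ∈ B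
    · exact Or.inl h1
    · rw [if_neg h1] at hx
      by_cases h2 : N ≤ x ∧ x - N ∈ B
      · exact Or.inr (by simpa using ⟨x - N, h2.2, by omega⟩)
      · exact absurd (if_neg h2) hx⟩

theorem exists_fix_and_avoid (S A B : Finset Atom) (hBS : Disjoint B S) :
    ∃ τ : FinPerm, (∀ a ∈ S, τ a = a) ∧ ∀ b ∈ B, τ b ∉ A := by
  obtain ⟨N, hN⟩ : ∃ N : ℕ, ∀ x ∈ S ∪ A ∪ B, x < N :=
    ⟨(S ∪ A ∪ B).sup _root_.id + 1, fun x hx => Nat.lt_succ_of_le (Finset.le_sup (f := _root_.id) hx)⟩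
  have hB : ∀ b ∈ B, b < N := fun b hb => hN b (by simp [hb])
  refine ⟨shiftSwap B N hB, fun a ha => ?_, fun b hb hA => ?_⟩
  · have haB : a ∉ B := Finset.disjoint_right.mp hBS ha
    have haN : a < N := hN a (by simp [ha])
    show shiftSwapFun B N a = a
    rw [shiftSwapFun, if_neg haB, if_neg fun h => absurd h.1 (Nat.not_le.mpr haN)]
  · rw [show shiftSwap B N hB b = b + N from if_pos hb] at hA
    exact Nat.not_lt.mpr (Nat.le_add_left N b)
      (hN _ (Finset.mem_union_left _ (Finset.mem_union_right _ hA)))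

end FinPerm

@[simp] theorem permAct_atom (π : FinPerm) (a : Atom) : permAct π (.atom a) = .atom (π a) := by
  rw [permAct]

@[simp] theorem permAct_var (π π' : FinPerm) (X : Unknown) :
    permAct π (.var π' X) = .var (π.comp π') X := by
  rw [permAct]

@[simp] theorem permAct_abs (π : FinPerm) (a : Atom) (t : Term) :
    permAct π (.abs a t) = .abs (π a) (permAct π t) := by
  rw [permAct]

@[simp] theorem permAct_app (π : FinPerm) (f : ℕ) (ts : List Term) :
    permAct π (.app f ts) = .app f (ts.map (permAct π)) := by
  rw [permAct, List.attach_map_val]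

@[simp] theorem subst_atom (θ : Subst) (a : Atom) : subst θ (.atom a) = .atom a := by
  rw [subst]

@[simp] theorem subst_var (θ : Subst) (π : FinPerm) (X : Unknown) :
    subst θ (.var π X) = permAct π (θ X) := by
  rw [subst]

@[simp] theorem subst_abs (θ : Subst) (a : Atom) (t : Term) :
    subst θ (.abs a t) = .abs a (subst θ t) := by
  rw [subst]

@[simp] theorem subst_app (θ : Subst) (f : ℕ) (ts : List Term) :
    subst θ (.app f ts) = .app f (ts.map (subst θ)) := by
  rw [subst, List.attach_map_val]

@[simp] theorem renameT_atom (τ : FinPerm) (ρ : Unknown → Unknown) (a : Atom) :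
    renameT τ ρ (.atom a) = .atom (τ a) := by
  rw [renameT]

@[simp] theorem renameT_var (τ : FinPerm) (ρ : Unknown → Unknown) (π : FinPerm) (X : Unknown) :
    renameT τ ρ (.var π X) = .var (τ.comp (π.comp τ.inv)) (ρ X) := by
  rw [renameT]

@[simp] theorem renameT_abs (τ : FinPerm) (ρ : Unknown → Unknown) (a : Atom) (t : Term) :
    renameT τ ρ (.abs a t) = .abs (τ a) (renameT τ ρ t) := by
  rw [renameT]

@[simp] theorem renameT_app (τ : FinPerm) (ρ : Unknown → Unknown) (f : ℕ) (ts : List Term) :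
    renameT τ ρ (.app f ts) = .app f (ts.map (renameT τ ρ)) := by
  rw [renameT, List.attach_map_val]

@[simp] theorem fillAux_atom (X : Unknown) (u : Term) (a : Atom) :
    fillAux X u (.atom a) = .atom a := by
  rw [fillAux]

theorem fillAux_var (X : Unknown) (u : Term) (π : FinPerm) (Y : Unknown) :
    fillAux X u (.var π Y) = if Y = X then u else .var π Y := by
  rw [fillAux]

@[simp] theorem fillAux_abs (X : Unknown) (u : Term) (a : Atom) (t : Term) :
    fillAux X u (.abs a t) = .abs a (fillAux X u t) := by
  rw [fillAux]

@[simp] theorem fillAux_app (X : Unknown) (u : Term) (f : ℕ) (ts : List Term) :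
    fillAux X u (.app f ts) = .app f (ts.map (fillAux X u)) := by
  rw [fillAux, List.attach_map_val]

@[simp] theorem atmsF_atom (a : Atom) : atmsF (.atom a) = {a} := by
  rw [atmsF]

@[simp] theorem atmsF_var (π : FinPerm) (X : Unknown) : atmsF (.var π X) = π.nontriv := by
  rw [atmsF]

@[simp] theorem atmsF_abs (a : Atom) (t : Term) : atmsF (.abs a t) = insert a (atmsF t) := by
  rw [atmsF]

@[simp] theorem atmsF_app (f : ℕ) (ts : List Term) : atmsF (.app f ts) = atmsLF ts := by
  rw [atmsF]

theorem atmsF_subset_atmsLF {t : Term} {ts : List Term} (ht : t ∈ ts) :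
    atmsF t ⊆ atmsLF ts := by
  induction ts with
  | nil => simp at ht
  | cons u us ih =>
    rw [atmsLF]
    rcases List.mem_cons.mp ht with rfl | ht
    · exact Finset.subset_union_left
    · exact (ih ht).trans Finset.subset_union_right

theorem permAct_id : ∀ t : Term, permAct FinPerm.id t = t
  | .atom a => by simp
  | .var π X => by simp; rfl
  | .abs a t => by simp [permAct_id t]
  | .app f ts => by
    simp only [permAct_app]
    rw [List.map_congr_left fun t ht => permAct_id t, List.map_id']
decreasing_by
  all_goals simp_wf
  have := List.sizeOf_lt_of_mem ht
  omega

theorem permAct_comp (π π' : FinPerm) : ∀ t : Term,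
    permAct π (permAct π' t) = permAct (π.comp π') t
  | .atom a => by simp
  | .var π₀ X => by simp; rfl
  | .abs a t => by simp [permAct_comp π π' t]
  | .app f ts => by
    simp only [permAct_app, List.map_map]
    exact congrArg _ (List.map_congr_left fun t ht => permAct_comp π π' t)
decreasing_by
  all_goals simp_wf
  have := List.sizeOf_lt_of_mem ht
  omega

theorem renameT_permAct (τ : FinPerm) (ρ : Unknown → Unknown) (π : FinPerm) : ∀ t : Term,
    renameT τ ρ (permAct π t) = permAct (τ.comp (π.comp τ.inv)) (renameT τ ρ t)
  | .atom a => by simp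
  | .var π₀ X => by
    simp only [permAct_var, renameT_var]
    exact congrArg (Term.var · _) (FinPerm.ext fun a => by simp)
  | .abs a t => by simp [renameT_permAct τ ρ π t]
  | .app f ts => by
    simp only [permAct_app, renameT_app, List.map_map]
    exact congrArg _ (List.map_congr_left fun t ht => renameT_permAct τ ρ π t)
decreasing_by
  all_goals simp_wf
  have := List.sizeOf_lt_of_mem ht
  omega

def Subst.rename (τ : FinPerm) (ρ : Unknown → Unknown) (θ : Subst) : Subst :=
  fun X => permAct τ.inv (renameT τ ρ (θ X))

theorem renameT_subst (τ : FinPerm) (ρ : Unknown → Unknown) (θ : Subst) : ∀ t : Term,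
    renameT τ ρ (subst θ t) = permAct τ (subst (θ.rename τ ρ) t)
  | .atom a => by simp
  | .var π X => by simp only [subst_var, renameT_permAct, permAct_comp, Subst.rename]
  | .abs a t => by simp [renameT_subst τ ρ θ t]
  | .app f ts => by
    simp only [subst_app, renameT_app, permAct_app, List.map_map]
    exact congrArg _ (List.map_congr_left fun t ht => renameT_subst τ ρ θ t)
decreasing_by
  all_goals simp_wf
  have := List.sizeOf_lt_of_mem ht
  omega

theorem renameT_fillAux (τ : FinPerm) (X : Unknown) (u : Term) : ∀ c : Term,
    renameT τ id (fillAux X u c) = fillAux X (renameT τ id u) (renameT τ id c)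
  | .atom a => by simp
  | .var π Y => by by_cases h : Y = X <;> simp [h, fillAux_var]
  | .abs a t => by simp [renameT_fillAux τ X u t]
  | .app f ts => by
    simp only [fillAux_app, renameT_app, List.map_map]
    exact congrArg _ (List.map_congr_left fun t ht => renameT_fillAux τ X u t)
decreasing_by
  all_goals simp_wf
  have := List.sizeOf_lt_of_mem ht
  omega

theorem renameT_eq_self (τ : FinPerm) : ∀ t : Term, (∀ a ∈ atmsF t, τ a = a) →
    renameT τ id t = t
  | .atom a, h => by simp [h a (by simp)]
  | .var π X, h => by
    rw [renameT_var, FinPerm.comp_comp_inv_eq_self (by simpa using h)]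
    rfl
  | .abs a t, h => by
    rw [renameT_abs, h a (by simp),
      renameT_eq_self τ t fun b hb => h b (by simp [hb])]
  | .app f ts, h => by
    rw [renameT_app, List.map_congr_left fun t ht => renameT_eq_self τ t fun b hb =>
      h b (by simpa using atmsF_subset_atmsLF ht hb), List.map_id']
decreasing_by
  all_goals simp_wf
  all_goals first
    | omega
    | (have := List.sizeOf_lt_of_mem ht; omega)

theorem countUnkL_map (X : Unknown) (f : Term → Term) {ts : List Term}
    (h : ∀ t ∈ ts, countUnk X (f t) = countUnk X t) :
    countUnkL X (ts.map f) = countUnkL X ts := by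
  induction ts with
  | nil => rfl
  | cons u us ih =>
    simp only [List.map_cons, countUnkL]
    rw [h u List.mem_cons_self, ih fun t ht => h t (List.mem_cons_of_mem _ ht)]

theorem countUnk_renameT (τ : FinPerm) (X : Unknown) : ∀ t : Term,
    countUnk X (renameT τ id t) = countUnk X t
  | .atom a => by simp [countUnk]
  | .var π Y => by simp [countUnk]
  | .abs a t => by simp [countUnk, countUnk_renameT τ X t]
  | .app f ts => by
    simp only [renameT_app, countUnk]
    exact countUnkL_map X _ fun t ht => countUnk_renameT τ X t
decreasing_by
  all_goals simp_wf
  have := List.sizeOf_lt_of_mem ht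
  omega

theorem Subterm.exists_of_renameT {τ : FinPerm} {u t : Term}
    (h : Subterm u (renameT τ id t)) : ∃ u₀, Subterm u₀ t ∧ u = renameT τ id u₀ := by
  generalize hv : renameT τ id t = v at h
  induction h generalizing t with
  | refl => exact ⟨t, .refl t, hv.symm⟩
  | abs _ ih =>
    cases t <;> simp only [renameT_abs, renameT_atom, renameT_var, renameT_app, reduceCtorEq,
      Term.abs.injEq] at hv
    obtain ⟨u₀, h₀, rfl⟩ := ih hv.2
    exact ⟨u₀, .abs h₀, rfl⟩
  | app hmem _ ih =>
    cases t <;> simp only [renameT_abs, renameT_atom, renameT_var, renameT_app, reduceCtorEq,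
      Term.app.injEq] at hv
    rw [← hv.2] at hmem
    obtain ⟨t₁, ht₁, rfl⟩ := List.mem_map.mp hmem
    obtain ⟨u₀, h₀, rfl⟩ := ih rfl
    exact ⟨u₀, .app ht₁ h₀, rfl⟩

theorem Aeq.refl (Δ : Ctx) : ∀ t : Term, Aeq Δ t t
  | .atom a => .atom
  | .var π X => .var fun a h => absurd rfl h
  | .abs a t => .absSame (Aeq.refl Δ t)
  | .app f ts => .app rfl fun p hp => by
    rw [List.zip_eq_zipWith, List.zipWith_self, List.mem_map] at hp
    obtain ⟨t, ht, rfl⟩ := hp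
    exact Aeq.refl Δ t
decreasing_by
  all_goals simp_wf
  have := List.sizeOf_lt_of_mem ht
  omega

theorem Fresh.mono {Δ Δ' : Ctx} (hsub : Δ ⊆ Δ') {a : Atom} {t : Term} (h : Fresh Δ a t) :
    Fresh Δ' a t := by
  induction h with
  | atom hab => exact .atom hab
  | var hmem => exact .var (hsub hmem)
  | absSame => exact .absSame
  | absDiff hab _ ih => exact .absDiff hab ih
  | app _ ih => exact .app ih

theorem Aeq.mono {Δ Δ' : Ctx} (hsub : Δ ⊆ Δ') {s t : Term} (h : Aeq Δ s t) : Aeq Δ' s t := by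
  induction h with
  | atom => exact .atom
  | var hmem => exact .var fun a ha => hsub (hmem a ha)
  | absSame _ ih => exact .absSame ih
  | absDiff hab hf _ ih => exact .absDiff hab (hf.mono hsub) ih
  | app hlen _ ih => exact .app hlen ih

theorem Fresh.perm {Δ : Ctx} {a : Atom} {t : Term} (π : FinPerm) (h : Fresh Δ a t) :
    Fresh Δ (π a) (permAct π t) := by
  induction h with
  | atom hab =>
    rw [permAct_atom]
    exact .atom fun hc => hab (π.apply_injective hc)
  | @var π' X hmem =>
    rw [permAct_var]
    refine .var ?_
    rwa [show (π.comp π').inv (π a) = π'.inv a from FinPerm.inv_apply_eq_iff.mpr (by simp)]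
  | absSame =>
    rw [permAct_abs]
    exact .absSame
  | absDiff hab _ ih =>
    rw [permAct_abs]
    exact .absDiff (fun hc => hab (π.apply_injective hc)) ih
  | app _ ih =>
    rw [permAct_app]
    exact .app fun t' ht' => by
      obtain ⟨u, hu, rfl⟩ := List.mem_map.mp ht'
      exact ih u hu

theorem Fresh.rename {Δ : Ctx} {a : Atom} {t : Term} (τ : FinPerm) (ρ : Unknown → Unknown)
    (h : Fresh Δ a t) : Fresh (renameCtx τ ρ Δ) (τ a) (renameT τ ρ t) := by
  induction h with
  | atom hab =>
    rw [renameT_atom]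
    exact .atom fun hc => hab (τ.apply_injective hc)
  | @var π X hmem =>
    rw [renameT_var]
    refine .var ?_
    rw [show (τ.comp (π.comp τ.inv)).inv (τ a) = τ (π.inv a) from
      FinPerm.inv_apply_eq_iff.mpr (by simp)]
    exact Finset.mem_image_of_mem _ hmem
  | absSame =>
    rw [renameT_abs]
    exact .absSame
  | absDiff hab _ ih =>
    rw [renameT_abs]
    exact .absDiff (fun hc => hab (τ.apply_injective hc)) ih
  | app _ ih =>
    rw [renameT_app]
    exact .app fun t' ht' => by
      obtain ⟨u, hu, rfl⟩ := List.mem_map.mp ht'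
      exact ih u hu

theorem Aeq.rename {Δ : Ctx} {s t : Term} (τ : FinPerm) (ρ : Unknown → Unknown)
    (h : Aeq Δ s t) : Aeq (renameCtx τ ρ Δ) (renameT τ ρ s) (renameT τ ρ t) := by
  induction h with
  | atom =>
    rw [renameT_atom]
    exact .atom
  | @var π π' X hmem =>
    rw [renameT_var, renameT_var]
    refine .var fun a ha => Finset.mem_image.mpr ⟨(τ.inv a, X), hmem _ fun hc => ?_, by simp⟩
    simp [hc] at ha
  | absSame _ ih =>
    rw [renameT_abs, renameT_abs]
    exact .absSame ih
  | absDiff hab hf _ ih =>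
    rw [renameT_abs, renameT_abs]
    refine .absDiff (fun hc => hab (τ.apply_injective hc)) (hf.rename τ ρ) ?_
    rwa [renameT_permAct, FinPerm.comp_swap_comp_inv] at ih
  | app hlen _ ih =>
    rw [renameT_app, renameT_app]
    refine .app (by simp [hlen]) fun p hp => ?_
    rw [List.zip_map, List.mem_map] at hp
    obtain ⟨q, hq, rfl⟩ := hp
    exact ih q hq

def Position.rename (τ : FinPerm) (C : Position) : Position where
  ctx := renameT τ id C.ctx
  hole := C.hole
  once := by rw [countUnk_renameT]; exact C.once
  idOnly := by
    intro π hsub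
    obtain ⟨u₀, hu₀, hπ⟩ := hsub.exists_of_renameT
    cases u₀ <;> simp only [renameT_atom, renameT_var, renameT_abs, renameT_app, reduceCtorEq,
      Term.var.injEq] at hπ
    obtain ⟨rfl, rfl⟩ := hπ
    rw [C.idOnly _ hu₀]
    exact FinPerm.ext fun x => by simp

theorem Position.rename_fill (τ : FinPerm) (C : Position) (u : Term) :
    renameT τ id (C.fill u) = (C.rename τ).fill (renameT τ id u) :=
  renameT_fillAux τ C.hole u C.ctx

theorem renameT_permAct_subst (τ π : FinPerm) (θ : Subst) (t : Term) :
    renameT τ id (permAct π (subst θ t)) = permAct (τ.comp π) (subst (θ.rename τ id) t) := by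
  rw [renameT_permAct, renameT_subst, permAct_comp]
  exact congrArg (permAct · _) (FinPerm.ext fun x => by simp)

theorem FreshSubst.rename {Δ N : Ctx} {θ : Subst} (τ : FinPerm) (h : FreshSubst Δ N θ) :
    FreshSubst (renameCtx τ id Δ) N (θ.rename τ id) := by
  intro p hp
  have := ((h p hp).rename τ id).perm τ.inv
  simp only [subst_var, permAct_id, FinPerm.inv_apply_apply] at this ⊢
  exact this

theorem OneStepR.rename {R : Rule} {Δ : Ctx} {s t : Term} (τ : FinPerm)
    (h : OneStepR R Δ s t) :
    OneStepR R (renameCtx τ id Δ) (renameT τ id s) (renameT τ id t) := by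
  obtain ⟨C, s', π, θ, rfl, hθ, hl, hr⟩ := h
  refine ⟨C.rename τ, renameT τ id s', τ.comp π, θ.rename τ id, C.rename_fill τ s',
    hθ.rename τ, ?_, ?_⟩
  · rw [← renameT_permAct_subst]
    exact hl.rename τ id
  · rw [← renameT_permAct_subst, ← Position.rename_fill]
    exact hr.rename τ id

theorem RewEq.rename {Rw : Set Rule} {Δ : Ctx} {s t : Term} (τ : FinPerm)
    (h : RewEq Rw Δ s t) : RewEq Rw (renameCtx τ id Δ) (renameT τ id s) (renameT τ id t) := by
  induction h with
  | step hstep =>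
    obtain ⟨R, hR, hRst⟩ := hstep
    exact .step ⟨R, hR, hRst.rename τ⟩
  | alpha ha => exact .alpha (ha.rename τ id)
  | symm _ ih => exact ih.symm
  | trans _ _ ih₁ ih₂ => exact ih₁.trans ih₂

theorem RewEq.mono {Rw : Set Rule} {Δ Δ' : Ctx} (hsub : Δ ⊆ Δ') {s t : Term}
    (h : RewEq Rw Δ s t) : RewEq Rw Δ' s t := by
  induction h with
  | step hstep =>
    obtain ⟨R, hR, C, s', π, θ, hs, hθ, hl, hr⟩ := hstep
    exact .step ⟨R, hR, C, s', π, θ, hs, fun p hp => (hθ p hp).mono hsub, hl.mono hsub,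
      hr.mono hsub⟩
  | alpha ha => exact .alpha (ha.mono hsub)
  | symm _ ih => exact ih.symm
  | trans _ _ ih₁ ih₂ => exact ih₁.trans ih₂

theorem RewEq.of_instance {Rw : Set Rule} {R : Rule}
    (hR : R ∈ Rw ∨ Rule.mk R.ctx R.rhs R.lhs ∈ Rw) {Δ : Ctx} {s t : Term}
    (C : Position) (π : FinPerm) {θ : Subst} (hθ : FreshSubst Δ R.ctx θ)
    (hl : Aeq Δ s (C.fill (permAct π (subst θ R.lhs))))
    (hr : Aeq Δ (C.fill (permAct π (subst θ R.rhs))) t) : RewEq Rw Δ s t := by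
  refine (RewEq.alpha hl).trans (RewEq.trans ?_ (.alpha hr))
  rcases hR with hR | hR
  · exact .step ⟨R, hR, C, _, π, θ, rfl, hθ, Aeq.refl _ _, Aeq.refl _ _⟩
  · exact .symm (.step ⟨_, hR, C, _, π, θ, rfl, hθ, Aeq.refl _ _, Aeq.refl _ _⟩)

theorem renameCtx_union (τ : FinPerm) (ρ : Unknown → Unknown) (Δ Γ : Ctx) :
    renameCtx τ ρ (Δ ∪ Γ) = renameCtx τ ρ Δ ∪ renameCtx τ ρ Γ :=
  Finset.image_union _ _

theorem renameCtx_eq_self {τ : FinPerm} {Δ : Ctx} (h : ∀ a ∈ ctxAtoms Δ, τ a = a) :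
    renameCtx τ id Δ = Δ := by
  conv_rhs => rw [← Finset.image_id (s := Δ)]
  refine Finset.image_congr fun p hp => ?_
  simp [h p.1 (Finset.mem_image_of_mem _ hp)]

theorem RewEq.exists_fresh_avoiding {Rw : Set Rule} {Δ Γ : Ctx} {s t : Term}
    (hΓ : FreshFor Γ (judgeAtms Δ s t)) (h : RewEq Rw (Δ ∪ Γ) s t) (A : Finset Atom) :
    ∃ Γ' : Ctx, FreshFor Γ' (judgeAtms Δ s t ∪ A) ∧ RewEq Rw (Δ ∪ Γ') s t := by
  have hdisj : Disjoint (ctxAtoms Γ) (judgeAtms Δ s t) := by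
    refine Finset.disjoint_left.mpr fun a ha => ?_
    obtain ⟨p, hp, rfl⟩ := Finset.mem_image.mp ha
    exact hΓ p hp
  obtain ⟨τ, hfix, havoid⟩ :=
    FinPerm.exists_fix_and_avoid (judgeAtms Δ s t) (judgeAtms Δ s t ∪ A) (ctxAtoms Γ) hdisj
  refine ⟨renameCtx τ id Γ, fun p hp => ?_, ?_⟩
  · obtain ⟨q, hq, rfl⟩ := Finset.mem_image.mp hp
    exact havoid q.1 (Finset.mem_image_of_mem _ hq)
  · have := h.rename τ
    rwa [renameCtx_union, renameCtx_eq_self fun a ha => hfix a (by simp [judgeAtms, ha]),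
      renameT_eq_self τ s fun a ha => hfix a (by simp [judgeAtms, ha]),
      renameT_eq_self τ t fun a ha => hfix a (by simp [judgeAtms, ha])] at this

theorem RewEq.exists_fresh_trans {Rw : Set Rule} {Δ Γ₁ Γ₂ : Ctx} {s t u : Term}
    (hΓ₁ : FreshFor Γ₁ (judgeAtms Δ s t)) (h₁ : RewEq Rw (Δ ∪ Γ₁) s t)
    (hΓ₂ : FreshFor Γ₂ (judgeAtms Δ t u)) (h₂ : RewEq Rw (Δ ∪ Γ₂) t u) :
    ∃ Γ : Ctx, FreshFor Γ (judgeAtms Δ s u) ∧ RewEq Rw (Δ ∪ Γ) s u := by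
  obtain ⟨Γ₁', hΓ₁', h₁'⟩ := h₁.exists_fresh_avoiding hΓ₁ (atmsF u)
  obtain ⟨Γ₂', hΓ₂', h₂'⟩ := h₂.exists_fresh_avoiding hΓ₂ (atmsF s)
  refine ⟨Γ₁' ∪ Γ₂', fun p hp hpsu => ?_, (h₁'.mono ?_).trans (h₂'.mono ?_)⟩
  · simp only [judgeAtms, Finset.mem_union] at hpsu
    rcases Finset.mem_union.mp hp with hp | hp
    · exact hΓ₁' p hp (by simp only [judgeAtms, Finset.mem_union]; tauto)
    · exact hΓ₂' p hp (by simp only [judgeAtms, Finset.mem_union]; tauto)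
  · exact Finset.union_subset_union_right Finset.subset_union_left
  · exact Finset.union_subset_union_right Finset.subset_union_right

theorem judgeAtms_comm (Δ : Ctx) (s t : Term) : judgeAtms Δ t s = judgeAtms Δ s t := by
  simp only [judgeAtms, Finset.union_assoc, Finset.union_comm (atmsF t)]

/-- Quasi-completeness of nominal rewriting: if `R` presents `T` and `Δ ⊢_T s = t`, then
there is a fresh context `Γ` (atoms avoiding `atms(Δ,s,t)`) with `Δ ∪ Γ ⊢_R s ↔* t`. -/
theorem rew_quasi_complete (Rw T : Set Rule) (hpres : Presents Rw T)
    (Δ : Ctx) (s t : Term) (h : AlgEq T Δ s t) :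
    ∃ Γ : Ctx, FreshFor Γ (judgeAtms Δ s t) ∧ RewEq Rw (Δ ∪ Γ) s t := by
  induction h with
  | axm R hR Γ C π θ hΓ hθ hl hr =>
    exact ⟨Γ, hΓ, .of_instance ((hpres R).mp hR) C π hθ hl hr⟩
  | refl u => exact ⟨∅, fun p hp => absurd hp (Finset.notMem_empty p), .alpha (Aeq.refl _ u)⟩
  | symm _ ih =>
    obtain ⟨Γ, hΓ, h⟩ := ih
    exact ⟨Γ, judgeAtms_comm Δ _ _ ▸ hΓ, h.symm⟩
  | trans _ _ ih₁ ih₂ =>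
    obtain ⟨Γ₁, hΓ₁, h₁⟩ := ih₁
    obtain ⟨Γ₂, hΓ₂, h₂⟩ := ih₂
    exact h₁.exists_fresh_trans hΓ₁ hΓ₂ h₂
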